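/- arXiv:1804.09385 — 5 statements merged into one kernel-verified Lean document; each statement's English description precedes it below -/
import Mathlib

section
/- Let λ > 0 and r ∈ ℝ satisfy |r| > t_{1/2,λ} = (54^{1/3}/4)·λ^{2/3}. Then f_{1/2,λ}(r) is a global minimizer over β ∈ ℝ of the function β ↦ (β − r)² + λ|β|^{1/2}; that is, for every β ∈ ℝ, (f_{1/2,λ}(r) − r)² + λ|f_{1/2,λ}(r)|^{1/2} ≤ (β − r)² + λ|β|^{1/2}. -/
/-!
For `r > 0` put `y = √|β|`; since `(|β| - r)² ≤ (β - r)²`, it suffices to minimise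
`g y = (y² - r)² + λ y` over `y ≥ 0`. Its stationarity equation `λ = 4 y (r - y²)` is a depressed
cubic, solved by Viète's trigonometric formula `x = 2 √(r/3) cos ((π - arccos (λ / (8 √(r/3)³))) / 3)`,
and `f_{1/2,λ}(r) = x²` by the double-angle formula. For such a root
`g y - g x = (y - x)² (y² + 2xy + 3x² - 2r)`, which is nonnegative as soon as `3x² ≥ 2r`, i.e.
`cos² > 1/2`. The threshold `|r| > t_{1/2,λ}` says precisely that the argument of `arccos` is below
`√2/2`, so the angle `(π - arccos ·)/3` lies in `[0, π/4)`. Negative `r` follows by the symmetry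
`r ↦ -r`, `β ↦ -β`.
-/

/-- The half-thresholding function `f_{1/2,λ}`. -/
noncomputable def f12 (lam r : ℝ) : ℝ :=
  (2 / 3) * r *
    (1 + Real.cos (2 * Real.pi / 3 -
      (2 / 3) * Real.arccos ((lam / 8) * (|r| / 3) ^ (-(3 : ℝ) / 2))))

/-- The threshold value `t_{1/2,λ} = (54^{1/3}/4)·λ^{2/3}`. -/
noncomputable def t12 (lam : ℝ) : ℝ :=
  (54 : ℝ) ^ ((1 : ℝ) / 3) / 4 * lam ^ ((2 : ℝ) / 3)

open Real

noncomputable def halfObjective (lam r β : ℝ) : ℝ :=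
  (β - r) ^ 2 + lam * |β| ^ ((1 : ℝ) / 2)

lemma halfObjective_neg (lam r β : ℝ) :
    halfObjective lam (-r) (-β) = halfObjective lam r β := by
  simp only [halfObjective, abs_neg]
  ring

lemma f12_neg (lam r : ℝ) : f12 lam (-r) = -f12 lam r := by
  simp only [f12, abs_neg]
  ring

lemma sq_sub_add_mul_le_of_cubic {lam r x y : ℝ} (hx : 0 < x) (hy : 0 ≤ y)
    (hcubic : lam = 4 * x * (r - x ^ 2)) (hx2 : 2 * r ≤ 3 * x ^ 2) :
    (x ^ 2 - r) ^ 2 + lam * x ≤ (y ^ 2 - r) ^ 2 + lam * y := by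
  have hq : 0 ≤ y ^ 2 + 2 * x * y + 3 * x ^ 2 - 2 * r := by
    nlinarith [mul_nonneg hy hx.le, sq_nonneg y]
  nlinarith [mul_nonneg (sq_nonneg (y - x)) hq]

lemma halfObjective_sq_le_of_cubic {lam r x : ℝ} (hr : 0 ≤ r) (hx : 0 < x)
    (hcubic : lam = 4 * x * (r - x ^ 2)) (hx2 : 2 * r ≤ 3 * x ^ 2) (β : ℝ) :
    halfObjective lam r (x ^ 2) ≤ halfObjective lam r β := by
  have hsqrt (u : ℝ) : |u| ^ ((1 : ℝ) / 2) = √|u| := (sqrt_eq_rpow _).symm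
  have hx' : √|x ^ 2| = x := by rw [abs_sq, sqrt_sq hx.le]
  have hβ : (|β| - r) ^ 2 ≤ (β - r) ^ 2 := by nlinarith [sq_abs β, le_abs_self β]
  have hg := sq_sub_add_mul_le_of_cubic hx (sqrt_nonneg |β|) hcubic hx2
  rw [sq_sqrt (abs_nonneg β)] at hg
  simp only [halfObjective, hsqrt, hx']
  linarith

lemma cos_trisection_cubic {a : ℝ} (ha₁ : -1 ≤ a) (ha₂ : a ≤ 1) :
    4 * cos ((π - arccos a) / 3) ^ 3 - 3 * cos ((π - arccos a) / 3) = -a := by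
  rw [← cos_three_mul, show 3 * ((π - arccos a) / 3) = π - arccos a by ring, cos_pi_sub,
    cos_arccos ha₁ ha₂]

lemma sqrt_two_div_two_lt_cos_trisection {a : ℝ} (ha : a < √2 / 2) :
    √2 / 2 < cos ((π - arccos a) / 3) := by
  have hφ : π / 4 < arccos a := lt_of_not_ge fun h => (arccos_le_pi_div_four.1 h).not_gt ha
  rw [← cos_pi_div_four]
  apply cos_lt_cos_of_nonneg_of_le_pi
  · linarith [arccos_le_pi a]
  · linarith [pi_pos]
  · linarith

lemma t12_pos {lam : ℝ} (hlam : 0 < lam) : 0 < t12 lam := by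
  unfold t12
  positivity

lemma t12_pow_three {lam : ℝ} (hlam : 0 ≤ lam) : t12 lam ^ 3 = 27 * lam ^ 2 / 32 := by
  have h54 : ((54 : ℝ) ^ ((1 : ℝ) / 3)) ^ 3 = 54 := by
    rw [← rpow_natCast, ← rpow_mul (by norm_num)]
    norm_num
  have hlam3 : (lam ^ ((2 : ℝ) / 3)) ^ 3 = lam ^ 2 := by
    rw [← rpow_natCast, ← rpow_mul hlam]
    norm_num
  rw [t12, mul_pow, div_pow, h54, hlam3]
  ring

lemma div_lt_sqrt_two_div_two_of_t12_lt {lam r : ℝ} (hlam : 0 < lam) (hr : t12 lam < r) :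
    lam / (8 * √(r / 3) ^ 3) < √2 / 2 := by
  have hs : 0 < √(r / 3) := sqrt_pos.2 (by linarith [t12_pos hlam])
  have hs2 : √(r / 3) ^ 2 = r / 3 := sq_sqrt (by linarith [t12_pos hlam])
  have hcube : 27 * lam ^ 2 / 32 < r ^ 3 := by
    rw [← t12_pow_three hlam.le]
    exact pow_lt_pow_left₀ hr (t12_pos hlam).le (by norm_num)
  have hsqrt2 : √2 ^ 2 = 2 := sq_sqrt (by norm_num)
  have hlt : lam < 4 * √2 * √(r / 3) ^ 3 := by
    refine lt_of_pow_lt_pow_left₀ 2 (by positivity) ?_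
    have hr3 : r ^ 3 = 27 * (√(r / 3) ^ 2) ^ 3 := by rw [hs2]; ring
    nlinarith
  rw [div_lt_div_iff₀ (by positivity) (by norm_num)]
  linarith

lemma f12_eq_sq {lam r : ℝ} (hr : 0 < r) :
    f12 lam r = (2 * √(r / 3) * cos ((π - arccos (lam / (8 * √(r / 3) ^ 3))) / 3)) ^ 2 := by
  have hs2 : √(r / 3) ^ 2 = r / 3 := sq_sqrt (by positivity)
  have harg : lam / 8 * (|r| / 3) ^ (-(3 : ℝ) / 2) = lam / (8 * √(r / 3) ^ 3) := by
    rw [abs_of_pos hr, sqrt_eq_rpow, ← rpow_natCast, ← rpow_mul (by positivity),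
      show (-(3 : ℝ) / 2) = -((1 / 2) * ((3 : ℕ) : ℝ)) by norm_num, rpow_neg (by positivity)]
    ring
  rw [f12, harg]
  set θ := (π - arccos (lam / (8 * √(r / 3) ^ 3))) / 3
  rw [show 2 * π / 3 - 2 / 3 * arccos (lam / (8 * √(r / 3) ^ 3)) = 2 * θ by ring, cos_two_mul]
  linear_combination -4 * cos θ ^ 2 * hs2

lemma halfObjective_f12_le_of_t12_lt {lam r : ℝ} (hlam : 0 < lam) (hr : t12 lam < r) (β : ℝ) :
    halfObjective lam r (f12 lam r) ≤ halfObjective lam r β := by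
  have hr0 : 0 < r := (t12_pos hlam).trans hr
  set s := √(r / 3)
  set a := lam / (8 * s ^ 3)
  have hs : 0 < s := sqrt_pos.2 (by positivity)
  have hs2 : s ^ 2 = r / 3 := sq_sqrt (by positivity)
  have ha : a < √2 / 2 := div_lt_sqrt_two_div_two_of_t12_lt hlam hr
  have hsqrt2 : √2 ^ 2 = 2 := sq_sqrt (by norm_num)
  have ha₁ : -1 ≤ a := by linarith [show 0 < a by positivity]
  have ha₂ : a ≤ 1 := by nlinarith [sqrt_nonneg 2]
  have hcos := cos_trisection_cubic ha₁ ha₂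
  have hc := sqrt_two_div_two_lt_cos_trisection ha
  set c := cos ((π - arccos a) / 3)
  have hc0 : 0 < c := lt_of_le_of_lt (by positivity) hc
  have hc2 : 1 / 2 < c ^ 2 := by nlinarith [sqrt_nonneg 2]
  rw [f12_eq_sq hr0]
  refine halfObjective_sq_le_of_cubic hr0.le (by positivity) ?_ ?_ β
  · have has : a * (8 * s ^ 3) = lam := div_mul_cancel₀ _ (by positivity)
    linear_combination -has + 8 * s ^ 3 * hcos + 24 * s * c * hs2
  · nlinarith [mul_lt_mul_of_pos_left hc2 (by positivity : (0 : ℝ) < 12 * s ^ 2)]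

theorem stmt_0 (lam r : ℝ) (hlam : 0 < lam) (hr : t12 lam < |r|) :
    ∀ β : ℝ,
      (f12 lam r - r) ^ 2 + lam * |f12 lam r| ^ ((1 : ℝ) / 2) ≤
        (β - r) ^ 2 + lam * |β| ^ ((1 : ℝ) / 2) := by
  intro β
  change halfObjective lam r (f12 lam r) ≤ halfObjective lam r β
  rcases le_or_gt 0 r with hr0 | hr0
  · exact halfObjective_f12_le_of_t12_lt hlam (abs_of_nonneg hr0 ▸ hr) β
  · have h := halfObjective_f12_le_of_t12_lt hlam (abs_of_neg hr0 ▸ hr) (-β)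
    rwa [f12_neg, halfObjective_neg, halfObjective_neg] at h
end

section
/- Fix y ∈ ℝⁿ and let z̃ ∈ ℝⁿ be a global minimizer over z ∈ ℝⁿ of z ↦ C^{1/2}_{λ,μ}(z, y). Then for every index i, if |[B_μ(y)]_i| > t_{1/2, λ_i} where λ_i = λμ/(|y_i| + ε_i)^{1/2 − p} and t_{1/2,λ_i} = (54^{1/3}/4)·λ_i^{2/3}, then z̃_i = f_{1/2, λ_i}([B_μ(y)]_i). -/
/-- `B_μ(y) = y + μ·Aᵀ(b − Ay)`. -/
noncomputable def Bmu {m n : ℕ} (A : Matrix (Fin m) (Fin n) ℝ) (b : Fin m → ℝ)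
    (μ : ℝ) (y : Fin n → ℝ) : Fin n → ℝ :=
  y + μ • (A.transpose.mulVec (b - A.mulVec y))

/-- The objective `C^θ_λ(z) = ‖Az − b‖₂² + λ·Σᵢ |zᵢ|^θ/(|zᵢ| + εᵢ)^{θ−p}`. -/
noncomputable def Cobj {m n : ℕ} (A : Matrix (Fin m) (Fin n) ℝ) (b : Fin m → ℝ)
    (lam p θ : ℝ) (ε : Fin n → ℝ) (z : Fin n → ℝ) : ℝ :=
  ∑ j, ((A.mulVec z - b) j) ^ 2 +
    lam * ∑ i, |z i| ^ θ / (|z i| + ε i) ^ (θ - p)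

/-- The surrogate functional
`C^θ_{λ,μ}(z,y) = μ‖Az − b‖₂² + λμ·Σᵢ |zᵢ|^θ/(|yᵢ| + εᵢ)^{θ−p} − μ‖Az − Ay‖₂² + ‖z − y‖₂²`. -/
noncomputable def Csur {m n : ℕ} (A : Matrix (Fin m) (Fin n) ℝ) (b : Fin m → ℝ)
    (lam μ p θ : ℝ) (ε : Fin n → ℝ) (z y : Fin n → ℝ) : ℝ :=
  μ * ∑ j, ((A.mulVec z - b) j) ^ 2 +
    lam * μ * ∑ i, |z i| ^ θ / (|y i| + ε i) ^ (θ - p) -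
    μ * ∑ j, ((A.mulVec z - A.mulVec y) j) ^ 2 +
    ∑ i, (z i - y i) ^ 2

lemma hq_aux (u s₀ r : ℝ) (hu0 : 0 ≤ u) (hs₀0 : 0 ≤ s₀) (h3s : 2*r < 3*s₀^2) :
    0 < u^2 + 2*s₀*u + 3*s₀^2 - 2*r := by
  nlinarith [sq_nonneg u, mul_nonneg hs₀0 hu0, h3s]

lemma t12_pos_s7 {l : ℝ} (hl : 0 < l) : 0 < t12 l := by
  unfold t12
  positivity

set_option maxHeartbeats 1600000 in
lemma scalar_pos (l r x : ℝ) (hl : 0 < l) (hr : t12 l < r)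
    (hx : ∀ t, (x - r)^2 + l * |x| ^ ((1:ℝ)/2) ≤ (t - r)^2 + l * |t| ^ ((1:ℝ)/2)) :
    x = f12 l r := by
  have hr0 : 0 < r := lt_trans (t12_pos_s7 hl) hr
  have hr3 : 27 * l^2 < 32 * r^3 := by
    have h1 : (t12 l)^3 < r^3 :=
      pow_lt_pow_left₀ hr (le_of_lt (t12_pos_s7 hl)) (by norm_num)
    have h2 : (t12 l)^3 = 54/64 * l^2 := by
      unfold t12
      have e1 : ((54:ℝ) ^ ((1:ℝ)/3))^3 = 54 := by
        rw [← Real.rpow_natCast ((54:ℝ) ^ ((1:ℝ)/3)) 3, ← Real.rpow_mul (by norm_num)]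
        norm_num
      have e2 : (l ^ ((2:ℝ)/3))^3 = l^2 := by
        rw [← Real.rpow_natCast (l ^ ((2:ℝ)/3)) 3, ← Real.rpow_mul hl.le]
        norm_num
      calc ((54:ℝ) ^ ((1:ℝ)/3) / 4 * l ^ ((2:ℝ)/3))^3
          = ((54:ℝ) ^ ((1:ℝ)/3))^3 / 64 * (l ^ ((2:ℝ)/3))^3 := by ring
        _ = 54/64 * l^2 := by rw [e1, e2]
    linarith
  set c := Real.sqrt (r/3) with hc_def
  have hc : 0 < c := Real.sqrt_pos.2 (by linarith)
  have hc2 : c^2 = r/3 := Real.sq_sqrt (by linarith)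
  set a := (l/8) * (r/3) ^ (-(3:ℝ)/2) with ha_def
  have hpow : (r/3) ^ (-(3:ℝ)/2) = (c^3)⁻¹ := by
    have h32 : (r/3) ^ ((3:ℝ)/2) = c^3 := by
      rw [show ((3:ℝ)/2) = (1/2) * (3:ℕ) by norm_num, Real.rpow_mul (by linarith : (0:ℝ) ≤ r/3),
        Real.rpow_natCast, ← Real.sqrt_eq_rpow]
    rw [show (-(3:ℝ)/2) = -((3:ℝ)/2) by ring, Real.rpow_neg (by linarith : (0:ℝ) ≤ r/3), h32]
  have ha : a = l / (8 * c^3) := by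
    rw [ha_def, hpow]; ring
  have ha0 : 0 < a := by
    rw [ha]; positivity
  have hc6 : c^6 = r^3/27 := by
    have h := hc2
    linear_combination (c^4 + c^2*(r/3) + (r/3)^2) * h
  have ha2 : a^2 < 1/2 := by
    rw [ha, div_pow, div_lt_iff₀ (by positivity)]
    have h64 : ((8:ℝ)*c^3)^2 = 64 * c^6 := by ring
    rw [h64, hc6]
    linarith
  have hs2 : Real.sqrt 2 ^ 2 = 2 := Real.sq_sqrt (by norm_num)
  have hs2nn : 0 ≤ Real.sqrt 2 := Real.sqrt_nonneg 2
  have hs2pos : 0 < Real.sqrt 2 := Real.sqrt_pos.2 (by norm_num)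
  have ha0' : 0 < a := ha0
  have ha1 : a < Real.sqrt 2 / 2 := by
    have hsq : a^2 < (Real.sqrt 2 / 2)^2 := by
      have : (Real.sqrt 2 / 2)^2 = 1/2 := by rw [div_pow, hs2]; norm_num
      rw [this]; exact ha2
    exact lt_of_pow_lt_pow_left₀ 2 (by positivity) hsq
  have hs2lt : Real.sqrt 2 < 2 := by nlinarith [hs2, hs2nn]
  have ha1' : a ≤ 1 := by linarith
  set φ := Real.arccos a with hφ_def
  have hφπ : φ ≤ Real.pi := Real.arccos_le_pi a
  have hcosφ : Real.cos φ = a := Real.cos_arccos (by linarith) ha1'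
  have hφ4 : Real.pi/4 < φ := by
    by_contra h
    push_neg at h
    have := Real.cos_le_cos_of_nonneg_of_le_pi (Real.arccos_nonneg a)
      (by linarith [Real.pi_pos] : Real.pi/4 ≤ Real.pi) h
    rw [hcosφ, Real.cos_pi_div_four] at this
    linarith
  set θ := (Real.pi - φ)/3 with hθ_def
  have hθ0 : 0 ≤ θ := by rw [hθ_def]; linarith
  have hθ4 : θ < Real.pi/4 := by rw [hθ_def]; linarith
  set cθ := Real.cos θ with hcθ_def
  have hcθ : Real.sqrt 2 / 2 < cθ := by
    have := Real.cos_lt_cos_of_nonneg_of_le_pi hθ0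
      (by linarith [Real.pi_pos] : Real.pi/4 ≤ Real.pi) hθ4
    rwa [Real.cos_pi_div_four] at this
  have hcθ0 : 0 < cθ := by linarith
  have hcθ2 : 1/2 < cθ^2 := by nlinarith [hcθ, hs2, hs2nn]
  have h3θ : 4*cθ^3 - 3*cθ = -a := by
    have h1 : Real.cos (3*θ) = 4*cθ^3 - 3*cθ := Real.cos_three_mul θ
    have h2 : 3*θ = Real.pi - φ := by rw [hθ_def]; ring
    rw [h2, Real.cos_pi_sub, hcosφ] at h1
    linarith
  have hre : r = 3*c^2 := by linarith [hc2]
  have hle : l = 8*a*c^3 := by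
    have hal : l / (8*c^3) * (8*c^3) = l := div_mul_cancel₀ l (by positivity)
    rw [ha]; linear_combination -hal
  set s₀ := 2*c*cθ with hs₀_def
  have hs₀ : 0 < s₀ := by rw [hs₀_def]; exact mul_pos (by linarith) hcθ0
  have hcube : s₀^3 - r*s₀ + l/4 = 0 := by
    rw [hs₀_def, hre, hle]
    linear_combination (2*c^3) * h3θ
  have hfeq : f12 l r = s₀^2 := by
    unfold f12
    rw [abs_of_pos hr0, ← ha_def, ← hφ_def]
    have hang : 2*Real.pi/3 - (2/3)*φ = 2*θ := by rw [hθ_def]; ring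
    rw [hang, Real.cos_two_mul, ← hcθ_def, hre]
    ring
  have hval : |s₀^2| ^ ((1:ℝ)/2) = s₀ := by
    rw [abs_of_pos (pow_pos hs₀ 2), ← Real.sqrt_eq_rpow, Real.sqrt_sq hs₀.le]
  have h3s : 2*r < 3*s₀^2 := by
    rw [hs₀_def, hre]
    nlinarith [mul_pos (mul_pos hc hc) (by linarith : (0:ℝ) < 2*cθ^2 - 1)]
  have hnn : ∀ t, 0 ≤ t → t ≠ s₀^2 →
      (s₀^2 - r)^2 + l * |s₀^2| ^ ((1:ℝ)/2) < (t - r)^2 + l * |t| ^ ((1:ℝ)/2) := by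
    intro t ht hne
    set u := Real.sqrt t with hu_def
    have hu0 : 0 ≤ u := Real.sqrt_nonneg t
    have hu2 : u^2 = t := Real.sq_sqrt ht
    have htv : |t| ^ ((1:ℝ)/2) = u := by
      rw [abs_of_nonneg ht, ← hu2, ← Real.sqrt_eq_rpow, Real.sqrt_sq hu0]
    have hune : u ≠ s₀ := by
      intro h; apply hne; rw [← hu2, h]
    rw [hval, htv, ← hu2]
    have hkey : (u^2 - r)^2 + l*u - ((s₀^2 - r)^2 + l*s₀)
        = (u - s₀)^2 * (u^2 + 2*s₀*u + 3*s₀^2 - 2*r) := by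
      linear_combination (4*(u - s₀)) * hcube
    have hq : 0 < u^2 + 2*s₀*u + 3*s₀^2 - 2*r := hq_aux u s₀ r hu0 hs₀.le h3s
    have hsq : 0 < (u - s₀)^2 := sq_pos_of_ne_zero (sub_ne_zero.2 hune)
    have hpr := mul_pos hsq hq
    linarith only [hkey, hpr]
  have hnn' : ∀ t, 0 ≤ t →
      (s₀^2 - r)^2 + l * |s₀^2| ^ ((1:ℝ)/2) ≤ (t - r)^2 + l * |t| ^ ((1:ℝ)/2) := by
    intro t ht
    rcases eq_or_ne t (s₀^2) with h | h
    · rw [h]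
    · exact (hnn t ht h).le
  have hstrict : ∀ t, t ≠ s₀^2 →
      (s₀^2 - r)^2 + l * |s₀^2| ^ ((1:ℝ)/2) < (t - r)^2 + l * |t| ^ ((1:ℝ)/2) := by
    intro t hne
    rcases le_or_gt 0 t with ht | ht
    · exact hnn t ht hne
    · have h1 := hnn' (-t) (by linarith)
      have h3 : ((-t) - r)^2 + l * |(-t)| ^ ((1:ℝ)/2) < (t - r)^2 + l * |t| ^ ((1:ℝ)/2) := by
        rw [abs_neg]
        have hd : (t - r)^2 - ((-t) - r)^2 = 4*((-t)*r) := by ring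
        have hp : 0 < (-t)*r := mul_pos (neg_pos.2 ht) hr0
        linarith only [hd, hp]
      linarith only [h1, h3]
  rw [hfeq]
  by_contra hne
  have h1 := hstrict x hne
  have h2 := hx (s₀^2)
  linarith only [h1, h2]

lemma scalar_min (l r x : ℝ) (hl : 0 < l) (hr : t12 l < |r|)
    (hx : ∀ t, (x - r)^2 + l * |x| ^ ((1:ℝ)/2) ≤ (t - r)^2 + l * |t| ^ ((1:ℝ)/2)) :
    x = f12 l r := by
  rcases lt_trichotomy r 0 with h | h | h
  · have hodd : f12 l (-r) = - f12 l r := by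
      unfold f12; rw [abs_neg]; ring
    have hr' : t12 l < -r := by rwa [abs_of_neg h] at hr
    have hx' : ∀ t, ((-x) - (-r))^2 + l * |(-x)| ^ ((1:ℝ)/2)
        ≤ (t - (-r))^2 + l * |t| ^ ((1:ℝ)/2) := by
      intro t
      have h0 := hx (-t)
      have e1 : ((-x) - (-r))^2 = (x - r)^2 := by ring
      have e2 : (t - (-r))^2 = ((-t) - r)^2 := by ring
      rw [e1, e2, abs_neg, ← abs_neg t]
      exact h0
    have := scalar_pos l (-r) (-x) hl hr' hx'
    rw [hodd] at this
    linarith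
  · rw [h, abs_zero] at hr; linarith [t12_pos_s7 hl]
  · rw [abs_of_pos h] at hr
    exact scalar_pos l r x hl hr hx

lemma csur_decomp {m n : ℕ} (A : Matrix (Fin m) (Fin n) ℝ) (b : Fin m → ℝ)
    (lam μ p : ℝ) (ε : Fin n → ℝ) (y z : Fin n → ℝ) :
    Csur A b lam μ p ((1:ℝ)/2) ε z y =
      (∑ i, ((z i - Bmu A b μ y i)^2 +
        (lam * μ / (|y i| + ε i) ^ ((1:ℝ)/2 - p)) * |z i| ^ ((1:ℝ)/2))) +
      (μ * ∑ j, (b j)^2 - μ * ∑ j, (A.mulVec y j)^2 +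
        ∑ i, (y i)^2 - ∑ i, (Bmu A b μ y i)^2) := by
  classical
  set v := A.transpose.mulVec (b - A.mulVec y) with hv_def
  have hB : ∀ i, Bmu A b μ y i = y i + μ * v i := by
    intro i; simp [Bmu, hv_def]
  have hkey : ∑ j, ((A.mulVec y - b) j) * (A.mulVec z j) = -∑ i, v i * z i := by
    have h1 : ∑ j, ((A.mulVec y - b) j) * (A.mulVec z j)
        = dotProduct (A.mulVec y - b) (A.mulVec z) := rfl
    rw [h1, Matrix.dotProduct_mulVec, ← Matrix.mulVec_transpose]
    have h2 : A.transpose.mulVec (A.mulVec y - b) = -v := by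
      rw [hv_def, show b - A.mulVec y = -(A.mulVec y - b) by abel, Matrix.mulVec_neg, neg_neg]
    rw [h2]
    simp [dotProduct, Finset.sum_neg_distrib]
  have hA : ∑ j, ((A.mulVec z - b) j)^2 =
      ∑ j, ((A.mulVec z - A.mulVec y) j)^2 + 2*(-∑ i, v i * z i)
        + ∑ j, (b j)^2 - ∑ j, (A.mulVec y j)^2 := by
    rw [← hkey]
    have e : ∀ j, ((A.mulVec z - b) j)^2 =
        ((A.mulVec z - A.mulVec y) j)^2 + 2*(((A.mulVec y - b) j) * (A.mulVec z j))
          + (b j)^2 - (A.mulVec y j)^2 := by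
      intro j; simp only [Pi.sub_apply]; ring
    rw [Finset.sum_congr rfl (fun j _ => e j)]
    rw [Finset.sum_sub_distrib, Finset.sum_add_distrib, Finset.sum_add_distrib,
      ← Finset.mul_sum]
  have hC : ∑ i, (z i - y i)^2 - 2*μ*(∑ i, v i * z i)
      = ∑ i, (z i - (y i + μ * v i))^2 + ∑ i, (y i)^2 - ∑ i, (y i + μ*v i)^2 := by
    have e : ∀ i, (z i - (y i + μ * v i))^2 + (y i)^2 - (y i + μ*v i)^2
        = (z i - y i)^2 - 2*μ*(v i * z i) := by
      intro i; ring
    have h1 : ∑ i, ((z i - (y i + μ * v i))^2 + (y i)^2 - (y i + μ*v i)^2)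
        = ∑ i, ((z i - y i)^2 - 2*μ*(v i * z i)) :=
      Finset.sum_congr rfl (fun i _ => e i)
    simp only [Finset.sum_sub_distrib, Finset.sum_add_distrib, ← Finset.mul_sum] at h1
    linarith only [h1]
  have hD : lam * μ * ∑ i, |z i| ^ ((1:ℝ)/2) / (|y i| + ε i) ^ ((1:ℝ)/2 - p)
      = ∑ i, (lam * μ / (|y i| + ε i) ^ ((1:ℝ)/2 - p)) * |z i| ^ ((1:ℝ)/2) := by
    rw [Finset.mul_sum]
    exact Finset.sum_congr rfl (fun i _ => by ring)
  have hBsum : ∀ (f : ℝ → ℝ), ∑ i, f (Bmu A b μ y i) = ∑ i, f (y i + μ * v i) :=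
    fun f => Finset.sum_congr rfl (fun i _ => by rw [hB i])
  unfold Csur
  rw [hA, hD]
  have hsplit : ∑ i, ((z i - Bmu A b μ y i)^2 +
      (lam * μ / (|y i| + ε i) ^ ((1:ℝ)/2 - p)) * |z i| ^ ((1:ℝ)/2))
      = ∑ i, (z i - (y i + μ * v i))^2 +
        ∑ i, (lam * μ / (|y i| + ε i) ^ ((1:ℝ)/2 - p)) * |z i| ^ ((1:ℝ)/2) := by
    rw [← Finset.sum_add_distrib]
    exact Finset.sum_congr rfl (fun i _ => by rw [hB i])
  rw [hsplit, hBsum (fun t => t^2)]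
  linarith only [hC]

theorem stmt_7 {m n : ℕ} (A : Matrix (Fin m) (Fin n) ℝ) (b : Fin m → ℝ)
    (lam μ p : ℝ) (ε : Fin n → ℝ)
    (hlam : 0 < lam) (hμ : 0 < μ) (hp : p ∈ Set.Ioo (0 : ℝ) 1)
    (hε : ∀ i, 0 < ε i) (y : Fin n → ℝ) (ztilde : Fin n → ℝ)
    (hmin : ∀ z : Fin n → ℝ,
      Csur A b lam μ p ((1 : ℝ) / 2) ε ztilde y ≤ Csur A b lam μ p ((1 : ℝ) / 2) ε z y) :
    ∀ i : Fin n,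
      t12 (lam * μ / (|y i| + ε i) ^ ((1 : ℝ) / 2 - p)) < |Bmu A b μ y i| →
        ztilde i = f12 (lam * μ / (|y i| + ε i) ^ ((1 : ℝ) / 2 - p)) (Bmu A b μ y i) := by
  classical
  intro i hi
  have hcoord : ∀ t : ℝ,
      (ztilde i - Bmu A b μ y i)^2
        + (lam * μ / (|y i| + ε i) ^ ((1:ℝ)/2 - p)) * |ztilde i| ^ ((1:ℝ)/2)
      ≤ (t - Bmu A b μ y i)^2
        + (lam * μ / (|y i| + ε i) ^ ((1:ℝ)/2 - p)) * |t| ^ ((1:ℝ)/2) := by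
    intro t
    have h := hmin (Function.update ztilde i t)
    rw [csur_decomp, csur_decomp] at h
    set F := fun (j : Fin n) (s : ℝ) => (s - Bmu A b μ y j)^2
      + (lam * μ / (|y j| + ε j) ^ ((1:ℝ)/2 - p)) * |s| ^ ((1:ℝ)/2) with hF_def
    have h1 : ∑ j, F j (Function.update ztilde i t j)
        = F i t + ∑ j ∈ Finset.univ \ {i}, F j (ztilde j) := by
      rw [Finset.sum_eq_add_sum_sdiff_singleton_of_mem (Finset.mem_univ i)
        (fun j => F j (Function.update ztilde i t j))]
      rw [Function.update_self]
      congr 1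
      refine Finset.sum_congr rfl (fun j hj => ?_)
      have hji : j ≠ i := by
        simp only [Finset.mem_sdiff, Finset.mem_singleton] at hj
        exact hj.2
      rw [Function.update_of_ne hji]
    have h2 : ∑ j, F j (ztilde j)
        = F i (ztilde i) + ∑ j ∈ Finset.univ \ {i}, F j (ztilde j) :=
      Finset.sum_eq_add_sum_sdiff_singleton_of_mem (Finset.mem_univ i) (fun j => F j (ztilde j))
    rw [h1, h2] at h
    have h3 : F i (ztilde i) ≤ F i t := by linarith only [h]
    simpa [hF_def] using h3
  have hden : 0 < |y i| + ε i := add_pos_of_nonneg_of_pos (abs_nonneg _) (hε i)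
  have hl : 0 < lam * μ / (|y i| + ε i) ^ ((1:ℝ)/2 - p) :=
    div_pos (mul_pos hlam hμ) (Real.rpow_pos_of_pos hden _)
  exact scalar_min _ _ _ hl hi hcoord
end

section
/- Suppose 0 < μ ≤ 1/‖A‖₂², where ‖A‖₂ is the operator norm of A from (ℝⁿ, ‖·‖₂) to (ℝ^m, ‖·‖₂). Then for all z, y ∈ ℝⁿ, C^{1/2}_{λ,μ}(z, y) ≥ μ·(‖Az − b‖₂² + λ·Σ_{i=1}^{n} |z_i|^{1/2}/(|y_i| + ε_i)^{1/2 − p}). Moreover, for every y ∈ ℝⁿ the diagonal identity C^{1/2}_{λ,μ}(y, y) = μ·C^{1/2}_λ(y) holds. -/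
/-- The operator norm of `A` from `(ℝⁿ, ‖·‖₂)` to `(ℝᵐ, ‖·‖₂)`. -/
noncomputable def l2OpNorm {m n : ℕ} (A : Matrix (Fin m) (Fin n) ℝ) : ℝ :=
  ‖LinearMap.toContinuousLinearMap (Matrix.toEuclideanLin A)‖

lemma key_ineq {m n : ℕ} (A : Matrix (Fin m) (Fin n) ℝ) (μ : ℝ)
    (hμ : 0 < μ) (hμ2 : μ ≤ 1 / (l2OpNorm A) ^ 2) (w : Fin n → ℝ) :
    μ * ∑ j, ((A.mulVec w) j) ^ 2 ≤ ∑ i, (w i) ^ 2 := by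
  set T := LinearMap.toContinuousLinearMap (Matrix.toEuclideanLin A) with hT
  have hN : 0 < l2OpNorm A := by
    rcases (norm_nonneg T).lt_or_eq with h | h
    · exact h
    · exfalso
      rw [l2OpNorm, ← h] at hμ2
      simp at hμ2
      linarith
  set w' : EuclideanSpace ℝ (Fin n) := (WithLp.equiv 2 (Fin n → ℝ)).symm w with hw'
  have h1 : ‖T w'‖ ≤ l2OpNorm A * ‖w'‖ := T.le_opNorm w'
  have h2 : ‖T w'‖ ^ 2 = ∑ j, ((A.mulVec w) j) ^ 2 := by
    rw [EuclideanSpace.norm_eq]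
    rw [Real.sq_sqrt (by positivity)]
    congr 1; ext j
    have : T w' = (WithLp.equiv 2 (Fin m → ℝ)).symm (A.mulVec w) := by
      simp [hT, hw']
    rw [this]
    simp [sq_abs]
  have h3 : ‖w'‖ ^ 2 = ∑ i, (w i) ^ 2 := by
    rw [EuclideanSpace.norm_eq, Real.sq_sqrt (by positivity)]
    congr 1; ext i; simp [hw', sq_abs]
  have h4 : ‖T w'‖ ^ 2 ≤ (l2OpNorm A) ^ 2 * ‖w'‖ ^ 2 := by
    rw [← mul_pow]
    exact pow_le_pow_left₀ (norm_nonneg _) h1 2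
  have hμ3 : μ * (l2OpNorm A) ^ 2 ≤ 1 := by
    rw [le_div_iff₀ (by positivity)] at hμ2
    linarith
  calc μ * ∑ j, ((A.mulVec w) j) ^ 2 = μ * ‖T w'‖ ^ 2 := by rw [h2]
    _ ≤ μ * ((l2OpNorm A) ^ 2 * ‖w'‖ ^ 2) := by
        exact mul_le_mul_of_nonneg_left h4 hμ.le
    _ = (μ * (l2OpNorm A) ^ 2) * ‖w'‖ ^ 2 := by ring
    _ ≤ 1 * ‖w'‖ ^ 2 := by
        exact mul_le_mul_of_nonneg_right hμ3 (by positivity)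
    _ = ∑ i, (w i) ^ 2 := by rw [one_mul, h3]

theorem stmt_9 {m n : ℕ} (A : Matrix (Fin m) (Fin n) ℝ) (b : Fin m → ℝ)
    (lam μ p : ℝ) (ε : Fin n → ℝ)
    (hlam : 0 < lam) (hp : p ∈ Set.Ioo (0 : ℝ) 1) (hε : ∀ i, 0 < ε i)
    (hμ : 0 < μ) (hμ2 : μ ≤ 1 / (l2OpNorm A) ^ 2) :
    (∀ z y : Fin n → ℝ,
        μ * (∑ j, ((A.mulVec z - b) j) ^ 2 +
            lam * ∑ i, |z i| ^ ((1 : ℝ) / 2) / (|y i| + ε i) ^ ((1 : ℝ) / 2 - p)) ≤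
          Csur A b lam μ p ((1 : ℝ) / 2) ε z y) ∧
      ∀ y : Fin n → ℝ,
        Csur A b lam μ p ((1 : ℝ) / 2) ε y y = μ * Cobj A b lam p ((1 : ℝ) / 2) ε y := by
  constructor
  · intro z y
    have key := key_ineq A μ hμ hμ2 (z - y)
    have hAzy : ∀ j, ((A.mulVec z - A.mulVec y) j) ^ 2 = ((A.mulVec (z - y)) j) ^ 2 := by
      intro j; rw [Matrix.mulVec_sub]
    simp only [Csur]
    have : μ * ∑ j, ((A.mulVec z - A.mulVec y) j) ^ 2 ≤ ∑ i, (z i - y i) ^ 2 := by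
      calc μ * ∑ j, ((A.mulVec z - A.mulVec y) j) ^ 2
          = μ * ∑ j, ((A.mulVec (z - y)) j) ^ 2 := by simp_rw [hAzy]
        _ ≤ ∑ i, ((z - y) i) ^ 2 := key
        _ = ∑ i, (z i - y i) ^ 2 := by simp
    nlinarith [this]
  · intro y
    simp only [Csur, Cobj]
    have : ∑ j, ((A.mulVec y - A.mulVec y) j) ^ 2 = 0 := by simp
    have h0 : ∑ i, (y i - y i) ^ 2 = (0:ℝ) := by simp
    rw [this, h0]
    ring
end

section
/- Suppose 0 < μ < 1/‖A‖₂², where ‖A‖₂ is the operator norm of A from (ℝⁿ, ‖·‖₂) to (ℝ^m, ‖·‖₂). Let (z^k)_{k≥0} be a sequence in ℝⁿ such that for every k, z^{k+1} is a global minimizer over z ∈ ℝⁿ of z ↦ C^{1/2}_{λ,μ}(z, z^k), and suppose that for every k, C^{1/2}_λ(z^{k+1}) ≤ (1/μ)·C^{1/2}_{λ,μ}(z^{k+1}, z^k). Then the sequence is asymptotically regular: ‖z^{k+1} − z^k‖₂² → 0 as k → ∞. -/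
/-!
The values `Cobj (z k)` decrease (compare `z (k+1)` with `w = z k` in the surrogate and use the
descent hypothesis), so they converge to some `L`, and the iterates stay in a bounded sublevel set.
It therefore suffices to show `u = v` for every limit `(u, v)` of a subsequence of
`(z k, z (k+1))`. In the limit, `u` and `v` both minimise `Csur · u`, `v` minimises `Csur · v`, and
`Csur v u = μ Cobj v`. Because `μ‖A‖² < 1`, the last identity forces, if `u ≠ v`, a coordinate `i`
where the weight `(|vᵢ| + εᵢ)^{p-1/2}` strictly exceeds `(|uᵢ| + εᵢ)^{p-1/2}` and `vᵢ ≠ 0`.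
The surrogate splits into the scalar problems `min_x (x - β)² + c |x|^{1/2}`, whose nonzero
minimiser `t` is unique and satisfies `c |t|^{1/2} / 2 ≤ t²`, with equality when `0` is a minimiser
as well. Uniqueness gives `uᵢ = 0`, and the two relations then compare the weights the wrong way.
-/

open Real Filter Topology Matrix

noncomputable def halfObj (β c x : ℝ) : ℝ := (x - β) ^ 2 + c * |x| ^ ((1 : ℝ) / 2)

section HalfObj

variable {β c t : ℝ}

lemma halfObj_neg (β c x : ℝ) : halfObj (-β) c x = halfObj β c (-x) := by
  simp only [halfObj, abs_neg]
  ring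

lemma halfObj_crit (ht : t ≠ 0) (hmin : ∀ x, halfObj β c t ≤ halfObj β c x) :
    2 * t * (t - β) + c / 2 * |t| ^ ((1 : ℝ) / 2) = 0 := by
  have hderiv : HasDerivAt (halfObj β c)
      (2 * (t - β) + c * (SignType.sign t * ((1 : ℝ) / 2) * |t| ^ ((1 : ℝ) / 2 - 1))) t := by
    have hsq := ((hasDerivAt_id t).sub_const β).pow 2
    have hroot := (hasDerivAt_abs ht).rpow_const (p := (1 : ℝ) / 2) (Or.inl (abs_ne_zero.2 ht))
    exact (hsq.add (hroot.const_mul c)).congr_deriv (by simp)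
  have hzero := IsLocalMin.hasDerivAt_eq_zero (Eventually.of_forall hmin) hderiv
  have hpow : |t| * |t| ^ ((1 : ℝ) / 2 - 1) = |t| ^ ((1 : ℝ) / 2) := by
    rw [mul_comm, ← rpow_add_one (abs_ne_zero.2 ht)]
    norm_num
  linear_combination
    t * hzero - (c / 2) * hpow - (c / 2) * |t| ^ ((1 : ℝ) / 2 - 1) * self_mul_sign t

lemma halfObj_sub_halfObj_zero (ht : t ≠ 0) (hmin : ∀ x, halfObj β c t ≤ halfObj β c x) :
    halfObj β c t - halfObj β c 0 = c / 2 * |t| ^ ((1 : ℝ) / 2) - t ^ 2 := by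
  have hcrit := halfObj_crit ht hmin
  simp only [halfObj, abs_zero, zero_rpow (one_div_ne_zero two_ne_zero)]
  linear_combination hcrit

lemma eq_of_isMin_halfObj_of_pos {t₁ t₂ : ℝ} (h₁ : 0 < t₁) (h₂ : 0 < t₂)
    (hm₁ : ∀ x, halfObj β c t₁ ≤ halfObj β c x) (hm₂ : ∀ x, halfObj β c t₂ ≤ halfObj β c x) :
    t₁ = t₂ := by
  have hcrit₁ := halfObj_crit h₁.ne' hm₁
  have hcrit₂ := halfObj_crit h₂.ne' hm₂
  have htie : halfObj β c t₁ = halfObj β c t₂ := le_antisymm (hm₁ t₂) (hm₂ t₁)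
  -- in the variables `a = √t₁`, `d = √t₂` everything is polynomial
  obtain ⟨a, ha, rfl⟩ : ∃ a, 0 < a ∧ a ^ 2 = t₁ := ⟨√t₁, sqrt_pos.2 h₁, sq_sqrt h₁.le⟩
  obtain ⟨d, hd, rfl⟩ : ∃ d, 0 < d ∧ d ^ 2 = t₂ := ⟨√t₂, sqrt_pos.2 h₂, sq_sqrt h₂.le⟩
  have hroot : ∀ s : ℝ, 0 ≤ s → |s ^ 2| ^ ((1 : ℝ) / 2) = s := fun s hs => by
    rw [abs_of_nonneg (sq_nonneg s), ← sqrt_eq_rpow, sqrt_sq hs]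
  simp only [halfObj, hroot a ha.le, hroot d hd.le] at hcrit₁ hcrit₂ htie
  by_contra hne
  have hsub : a - d ≠ 0 := sub_ne_zero.2 fun h => hne (by rw [h])
  have e₁ : 4 * a ^ 3 - 4 * a * β + c = 0 :=
    (mul_eq_zero_iff_left ha.ne').1 (by linear_combination 2 * hcrit₁)
  have e₂ : 4 * d ^ 3 - 4 * d * β + c = 0 :=
    (mul_eq_zero_iff_left hd.ne').1 (by linear_combination 2 * hcrit₂)
  have hβ : a ^ 2 + a * d + d ^ 2 - β = 0 :=
    (mul_eq_zero_iff_left hsub).1 (by linear_combination (e₁ - e₂) / 4)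
  have hc : (a + d) * (a ^ 2 + d ^ 2 - 2 * β) + c = 0 :=
    (mul_eq_zero_iff_left hsub).1 (by linear_combination htie)
  have : (a + d) * (a - d) ^ 2 = 0 := by linear_combination e₁ - hc + (2 * d - 2 * a) * hβ
  have : 0 < (a + d) * (a - d) ^ 2 := by positivity
  linarith

lemma mul_pos_of_isMin_halfObj (hc : 0 < c) (ht : t ≠ 0)
    (hmin : ∀ x, halfObj β c t ≤ halfObj β c x) : 0 < β * t := by
  have hcrit := halfObj_crit ht hmin
  have hroot : 0 < |t| ^ ((1 : ℝ) / 2) := rpow_pos_of_pos (abs_pos.2 ht) _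
  nlinarith [mul_pos hc hroot, sq_pos_of_ne_zero ht]

lemma eq_of_isMin_halfObj (hc : 0 < c) {t₁ t₂ : ℝ} (h₁ : t₁ ≠ 0) (h₂ : t₂ ≠ 0)
    (hm₁ : ∀ x, halfObj β c t₁ ≤ halfObj β c x) (hm₂ : ∀ x, halfObj β c t₂ ≤ halfObj β c x) :
    t₁ = t₂ := by
  have hsign : 0 < t₁ * t₂ := by
    have := mul_pos (mul_pos_of_isMin_halfObj hc h₁ hm₁) (mul_pos_of_isMin_halfObj hc h₂ hm₂)
    nlinarith [sq_nonneg β]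
  rcases h₁.lt_or_gt with hneg | hpos
  · have hm₁' : ∀ x, halfObj (-β) c (-t₁) ≤ halfObj (-β) c x := fun x => by
      simpa only [halfObj_neg, neg_neg] using hm₁ (-x)
    have hm₂' : ∀ x, halfObj (-β) c (-t₂) ≤ halfObj (-β) c x := fun x => by
      simpa only [halfObj_neg, neg_neg] using hm₂ (-x)
    exact neg_inj.1 (eq_of_isMin_halfObj_of_pos (by linarith) (by nlinarith) hm₁' hm₂')
  · exact eq_of_isMin_halfObj_of_pos hpos (pos_of_mul_pos_right hsign hpos.le) hm₁ hm₂

end HalfObj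

lemma apply_le_of_forall_sum_apply_le {ι α M : Type*} [Fintype ι] [DecidableEq ι]
    [AddCommMonoid M] [PartialOrder M] [IsOrderedCancelAddMonoid M] {f : ι → α → M} {v : ι → α}
    (h : ∀ w : ι → α, ∑ i, f i (v i) ≤ ∑ i, f i (w i)) (i : ι) (x : α) : f i (v i) ≤ f i x := by
  have := h (Function.update v i x)
  rw [Fintype.sum_eq_add_sum_compl i, Fintype.sum_eq_add_sum_compl i (fun j => f j _),
    Function.update_self] at this
  refine le_of_add_le_add_right (this.trans_eq (congrArg _ (Finset.sum_congr rfl fun j hj => ?_)))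
  rw [Function.update_of_ne (by simpa using hj)]

section Surrogate

variable {m n : ℕ} {A : Matrix (Fin m) (Fin n) ℝ} {b : Fin m → ℝ} {lam μ p θ : ℝ}
  {ε : Fin n → ℝ}

lemma Csur_eq_mul_Cobj_add (z y : Fin n → ℝ) :
    Csur A b lam μ p θ ε z y = μ * Cobj A b lam p θ ε z
      + lam * μ * ∑ i, (|z i| ^ θ / (|y i| + ε i) ^ (θ - p) - |z i| ^ θ / (|z i| + ε i) ^ (θ - p))
      + (∑ i, (z i - y i) ^ 2 - μ * ∑ j, (A *ᵥ (z - y)) j ^ 2) := by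
  simp only [Csur, Cobj, mulVec_sub, Finset.sum_sub_distrib]
  ring

lemma Csur_self (z : Fin n → ℝ) : Csur A b lam μ p θ ε z z = μ * Cobj A b lam p θ ε z := by
  simp [Csur_eq_mul_Cobj_add]

variable (lam μ p ε) in
noncomputable def surCoeff (y : Fin n → ℝ) (i : Fin n) : ℝ :=
  lam * μ * (|y i| + ε i) ^ (p - (1 : ℝ) / 2)

lemma mul_div_rpow_eq_surCoeff_mul {i : Fin n} (hε : 0 ≤ ε i) (z y : Fin n → ℝ) :
    lam * μ * (|z i| ^ ((1 : ℝ) / 2) / (|y i| + ε i) ^ ((1 : ℝ) / 2 - p))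
      = surCoeff lam μ p ε y i * |z i| ^ ((1 : ℝ) / 2) := by
  rw [surCoeff, ← neg_sub, rpow_neg (by positivity), div_inv_eq_mul]
  ring

lemma Csur_half_eq_sum_halfObj_add (hε : ∀ i, 0 ≤ ε i) (z y : Fin n → ℝ) :
    Csur A b lam μ p ((1 : ℝ) / 2) ε z y
      = ∑ i, halfObj (Bmu A b μ y i) (surCoeff lam μ p ε y i) (z i)
        + (μ * ∑ j, b j ^ 2 - μ * ∑ j, (A *ᵥ y) j ^ 2 + ∑ i, y i ^ 2 - ∑ i, Bmu A b μ y i ^ 2) := by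
  set g := Aᵀ *ᵥ (b - A *ᵥ y)
  have hadj : ∑ i, z i * g i = ∑ j, (A *ᵥ z) j * (b - A *ᵥ y) j := by
    change z ⬝ᵥ g = (A *ᵥ z) ⬝ᵥ (b - A *ᵥ y)
    rw [dotProduct_mulVec, vecMul_transpose]
  have hfit : μ * ∑ j, (A *ᵥ z - b) j ^ 2 - μ * ∑ j, (A *ᵥ z - A *ᵥ y) j ^ 2
      = μ * ∑ j, b j ^ 2 - μ * ∑ j, (A *ᵥ y) j ^ 2
        - 2 * μ * ∑ j, (A *ᵥ z) j * (b - A *ᵥ y) j := by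
    simp only [Finset.mul_sum, ← Finset.sum_sub_distrib]
    exact Finset.sum_congr rfl fun j _ => by simp only [Pi.sub_apply]; ring
  have hprox : ∑ i, halfObj (Bmu A b μ y i) (surCoeff lam μ p ε y i) (z i)
        + ∑ i, y i ^ 2 - ∑ i, Bmu A b μ y i ^ 2
      = ∑ i, (z i - y i) ^ 2 - 2 * μ * ∑ i, z i * g i
        + ∑ i, surCoeff lam μ p ε y i * |z i| ^ ((1 : ℝ) / 2) := by
    simp only [Finset.mul_sum, ← Finset.sum_sub_distrib, ← Finset.sum_add_distrib]
    refine Finset.sum_congr rfl fun i _ => ?_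
    simp only [halfObj, Bmu, g, Pi.add_apply, Pi.smul_apply, smul_eq_mul]
    ring
  have hpen : lam * μ * ∑ i, |z i| ^ ((1 : ℝ) / 2) / (|y i| + ε i) ^ ((1 : ℝ) / 2 - p)
      = ∑ i, surCoeff lam μ p ε y i * |z i| ^ ((1 : ℝ) / 2) := by
    rw [Finset.mul_sum]
    exact Finset.sum_congr rfl fun i _ => mul_div_rpow_eq_surCoeff_mul (hε i) z y
  rw [Csur]
  linear_combination hfit + hpen - hprox + 2 * μ * hadj

lemma halfObj_le_of_forall_Csur_le (hε : ∀ i, 0 ≤ ε i) {v y : Fin n → ℝ}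
    (hv : ∀ w, Csur A b lam μ p ((1 : ℝ) / 2) ε v y ≤ Csur A b lam μ p ((1 : ℝ) / 2) ε w y)
    (i : Fin n) (x : ℝ) :
    halfObj (Bmu A b μ y i) (surCoeff lam μ p ε y i) (v i)
      ≤ halfObj (Bmu A b μ y i) (surCoeff lam μ p ε y i) x :=
  apply_le_of_forall_sum_apply_le
    (f := fun i => halfObj (Bmu A b μ y i) (surCoeff lam μ p ε y i))
    (fun w => by simpa only [Csur_half_eq_sum_halfObj_add hε, add_le_add_iff_right] using hv w) i x

lemma sum_sq_mulVec_le (A : Matrix (Fin m) (Fin n) ℝ) (x : Fin n → ℝ) :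
    ∑ j, (A *ᵥ x) j ^ 2 ≤ l2OpNorm A ^ 2 * ∑ i, x i ^ 2 := by
  have h := pow_le_pow_left₀ (norm_nonneg _)
    ((LinearMap.toContinuousLinearMap (toEuclideanLin A)).le_opNorm (WithLp.toLp 2 x)) 2
  rw [mul_pow, EuclideanSpace.norm_sq_eq, EuclideanSpace.norm_sq_eq] at h
  simpa [l2OpNorm, toLpLin_toLp] using h

lemma sum_sq_sub_mul_sum_sq_mulVec_pos (hμ : 0 ≤ μ) (hμA : μ * l2OpNorm A ^ 2 < 1)
    {x : Fin n → ℝ} (hx : x ≠ 0) : 0 < ∑ i, x i ^ 2 - μ * ∑ j, (A *ᵥ x) j ^ 2 := by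
  have hpos : 0 < ∑ i, x i ^ 2 := by
    obtain ⟨i, hi⟩ := Function.ne_iff.1 hx
    exact Finset.sum_pos' (fun j _ => sq_nonneg _) ⟨i, Finset.mem_univ i, sq_pos_of_ne_zero hi⟩
  nlinarith [mul_le_mul_of_nonneg_left (sum_sq_mulVec_le A x) hμ]

theorem eq_of_isMin_Csur (hlam : 0 < lam) (hμ : 0 < μ) (hμA : μ * l2OpNorm A ^ 2 < 1)
    (hε : ∀ i, 0 < ε i) {u v : Fin n → ℝ}
    (hu : ∀ w, Csur A b lam μ p ((1 : ℝ) / 2) ε u u ≤ Csur A b lam μ p ((1 : ℝ) / 2) ε w u)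
    (hvu : ∀ w, Csur A b lam μ p ((1 : ℝ) / 2) ε v u ≤ Csur A b lam μ p ((1 : ℝ) / 2) ε w u)
    (hv : ∀ w, Csur A b lam μ p ((1 : ℝ) / 2) ε v v ≤ Csur A b lam μ p ((1 : ℝ) / 2) ε w v)
    (hdesc : Csur A b lam μ p ((1 : ℝ) / 2) ε v u ≤ μ * Cobj A b lam p ((1 : ℝ) / 2) ε v) :
    u = v := by
  by_contra hne
  have hε' : ∀ i, 0 ≤ ε i := fun i => (hε i).le
  have hgap := sum_sq_sub_mul_sum_sq_mulVec_pos (A := A) hμ.le hμA (sub_ne_zero.2 (Ne.symm hne))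
  have hsum : ∑ i, |v i| ^ ((1 : ℝ) / 2) / (|u i| + ε i) ^ ((1 : ℝ) / 2 - p)
      < ∑ i, |v i| ^ ((1 : ℝ) / 2) / (|v i| + ε i) ^ ((1 : ℝ) / 2 - p) := by
    rw [Csur_eq_mul_Cobj_add, Finset.sum_sub_distrib] at hdesc
    simp only [Pi.sub_apply] at hgap
    nlinarith [mul_pos hlam hμ]
  obtain ⟨i, -, hi⟩ := Finset.exists_lt_of_sum_lt hsum
  have hcoeff : surCoeff lam μ p ε u i * |v i| ^ ((1 : ℝ) / 2)
      < surCoeff lam μ p ε v i * |v i| ^ ((1 : ℝ) / 2) := by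
    rw [← mul_div_rpow_eq_surCoeff_mul (hε' i), ← mul_div_rpow_eq_surCoeff_mul (hε' i)]
    exact mul_lt_mul_of_pos_left hi (mul_pos hlam hμ)
  have hvi : v i ≠ 0 := by
    rintro hvi
    simp [hvi] at hcoeff
  have hui : u i = 0 := by
    by_contra hui
    have hc : 0 < surCoeff lam μ p ε u i := by
      have := hε i
      unfold surCoeff
      positivity
    have := eq_of_isMin_halfObj hc hui hvi (halfObj_le_of_forall_Csur_le hε' hu i)
      (halfObj_le_of_forall_Csur_le hε' hvu i)
    simp [surCoeff, this] at hcoeff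
  have hu0 := halfObj_le_of_forall_Csur_le hε' hu i (v i)
  have hv0 := halfObj_le_of_forall_Csur_le hε' hv i 0
  rw [hui] at hu0
  have hu_gap := halfObj_sub_halfObj_zero hvi (halfObj_le_of_forall_Csur_le hε' hvu i)
  have hv_gap := halfObj_sub_halfObj_zero hvi (halfObj_le_of_forall_Csur_le hε' hv i)
  linarith

end Surrogate

section Iteration

variable {m n : ℕ} {A : Matrix (Fin m) (Fin n) ℝ} {b : Fin m → ℝ} {lam μ p θ : ℝ}
  {ε : Fin n → ℝ}

lemma continuous_penalty {X : Type*} [TopologicalSpace X] {i : Fin n} (hθ : 0 ≤ θ)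
    (hε : 0 < ε i) {f g : X → Fin n → ℝ} (hf : Continuous f) (hg : Continuous g) :
    Continuous fun x => |f x i| ^ θ / (|g x i| + ε i) ^ (θ - p) := by
  have hpos : ∀ x, 0 < |g x i| + ε i := fun x => by positivity
  refine Continuous.div (by fun_prop (disch := exact Or.inr hθ)) ?_
    fun x => (rpow_pos_of_pos (hpos x) _).ne'
  exact (by fun_prop : Continuous fun x => |g x i| + ε i).rpow_const fun x => Or.inl (hpos x).ne'

lemma continuous_Cobj (hθ : 0 ≤ θ) (hε : ∀ i, 0 < ε i) :
    Continuous (Cobj A b lam p θ ε) := by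
  have := fun i => continuous_penalty (p := p) hθ (hε i) continuous_id continuous_id
  unfold Cobj
  fun_prop

lemma continuous_Csur (hθ : 0 ≤ θ) (hε : ∀ i, 0 < ε i) :
    Continuous fun q : (Fin n → ℝ) × (Fin n → ℝ) => Csur A b lam μ p θ ε q.1 q.2 := by
  have := fun i => continuous_penalty (p := p) hθ (hε i) continuous_fst continuous_snd
  unfold Csur
  fun_prop

lemma Cobj_nonneg (hlam : 0 ≤ lam) (hε : ∀ i, 0 ≤ ε i) (z : Fin n → ℝ) :
    0 ≤ Cobj A b lam p θ ε z := by
  refine add_nonneg (by positivity) (mul_nonneg hlam (Finset.sum_nonneg fun i _ => ?_))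
  have := hε i
  positivity

lemma abs_le_of_Cobj_le (hlam : 0 < lam) (hp : 0 < p) (hε : ∀ i, 0 ≤ ε i) {C : ℝ}
    {x : Fin n → ℝ} (hx : Cobj A b lam p ((1 : ℝ) / 2) ε x ≤ C) (i : Fin n) :
    |x i| ≤ max (ε i) ((√2 * C / lam) ^ p⁻¹) := by
  set t := |x i|
  rcases le_or_gt t (ε i) with hle | hgt
  · exact le_max_of_le_left hle
  have hεi := hε i
  have ht : 0 < t := hεi.trans_lt hgt
  have hterm : t ^ ((1 : ℝ) / 2) / (t + ε i) ^ ((1 : ℝ) / 2 - p) ≤ C / lam := by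
    rw [le_div_iff₀' hlam]
    have hsingle := Finset.single_le_sum
      (f := fun j => |x j| ^ ((1 : ℝ) / 2) / (|x j| + ε j) ^ ((1 : ℝ) / 2 - p))
      (fun j _ => by have := hε j; positivity) (Finset.mem_univ i)
    unfold Cobj at hx
    nlinarith [Finset.sum_nonneg fun j (_ : j ∈ Finset.univ) => sq_nonneg ((A *ᵥ x - b) j)]
  have hlow : t ^ p / √2 ≤ t ^ ((1 : ℝ) / 2) / (t + ε i) ^ ((1 : ℝ) / 2 - p) := by
    rw [rpow_sub (by positivity), div_div_eq_mul_div,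
      div_le_div_iff₀ (by positivity) (rpow_pos_of_pos (by positivity) _)]
    have h₁ : (t + ε i) ^ ((1 : ℝ) / 2) ≤ √2 * t ^ ((1 : ℝ) / 2) := by
      rw [sqrt_eq_rpow, ← mul_rpow zero_le_two ht.le]
      exact rpow_le_rpow (by positivity) (by linarith) (by norm_num)
    have h₂ : t ^ p ≤ (t + ε i) ^ p := rpow_le_rpow ht.le (by linarith) hp.le
    calc t ^ p * (t + ε i) ^ ((1 : ℝ) / 2) ≤ t ^ p * (√2 * t ^ ((1 : ℝ) / 2)) := by gcongr
      _ ≤ (t + ε i) ^ p * (√2 * t ^ ((1 : ℝ) / 2)) := by gcongr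
      _ = t ^ ((1 : ℝ) / 2) * (t + ε i) ^ p * √2 := by ring
  have hpow : t ^ p ≤ √2 * C / lam := by
    rw [mul_div_assoc, ← div_le_iff₀' (by positivity)]
    exact hlow.trans hterm
  refine le_max_of_le_right ((le_rpow_inv_iff_of_pos ht.le ?_ hp).2 hpow)
  exact (rpow_nonneg ht.le p).trans hpow

lemma isBounded_Cobj_sublevel (hlam : 0 < lam) (hp : 0 < p) (hε : ∀ i, 0 ≤ ε i) (C : ℝ) :
    Bornology.IsBounded {x | Cobj A b lam p ((1 : ℝ) / 2) ε x ≤ C} := by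
  set R : Fin n → ℝ := fun i => max (ε i) ((√2 * C / lam) ^ p⁻¹)
  refine (Metric.isBounded_Icc (-R) R).subset fun x hx => ?_
  have hx := fun i => abs_le.1 (abs_le_of_Cobj_le hlam hp hε hx i)
  exact ⟨fun i => (hx i).1, fun i => (hx i).2⟩

variable {z : ℕ → Fin n → ℝ}

lemma antitone_Cobj_of_isMin_Csur (hμ : 0 < μ)
    (hmin : ∀ k w, Csur A b lam μ p θ ε (z (k + 1)) (z k) ≤ Csur A b lam μ p θ ε w (z k))
    (hdesc : ∀ k, Cobj A b lam p θ ε (z (k + 1))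
      ≤ 1 / μ * Csur A b lam μ p θ ε (z (k + 1)) (z k)) :
    Antitone fun k => Cobj A b lam p θ ε (z k) := by
  refine antitone_nat_of_succ_le fun k => (hdesc k).trans ?_
  rw [one_div_mul_eq_div, div_le_iff₀' hμ, ← Csur_self]
  exact hmin k (z k)

lemma exists_tendsto_Cobj_Csur (hlam : 0 ≤ lam) (hε : ∀ i, 0 ≤ ε i) (hμ : 0 < μ)
    (hmin : ∀ k w, Csur A b lam μ p θ ε (z (k + 1)) (z k) ≤ Csur A b lam μ p θ ε w (z k))
    (hdesc : ∀ k, Cobj A b lam p θ ε (z (k + 1))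
      ≤ 1 / μ * Csur A b lam μ p θ ε (z (k + 1)) (z k)) :
    ∃ L, Tendsto (fun k => Cobj A b lam p θ ε (z k)) atTop (𝓝 L) ∧
      Tendsto (fun k => Csur A b lam μ p θ ε (z (k + 1)) (z k)) atTop (𝓝 (μ * L)) := by
  have hanti := antitone_Cobj_of_isMin_Csur hμ hmin hdesc
  have hT := tendsto_atTop_ciInf hanti ⟨0, Set.forall_mem_range.2 fun k => Cobj_nonneg hlam hε _⟩
  refine ⟨_, hT, tendsto_of_tendsto_of_tendsto_of_le_of_le
    ((hT.comp (tendsto_add_atTop_nat 1)).const_mul μ) (hT.const_mul μ) (fun k => ?_) fun k => ?_⟩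
  · have := hdesc k
    rwa [one_div_mul_eq_div, le_div_iff₀' hμ] at this
  · simpa only [Csur_self] using hmin k (z k)

theorem eq_of_tendsto_iterate_pair (hlam : 0 < lam) (hμ : 0 < μ) (hμA : μ * l2OpNorm A ^ 2 < 1)
    (hε : ∀ i, 0 < ε i)
    (hmin : ∀ k w, Csur A b lam μ p ((1 : ℝ) / 2) ε (z (k + 1)) (z k)
      ≤ Csur A b lam μ p ((1 : ℝ) / 2) ε w (z k))
    {L : ℝ} (hT : Tendsto (fun k => Cobj A b lam p ((1 : ℝ) / 2) ε (z k)) atTop (𝓝 L))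
    (hS : Tendsto (fun k => Csur A b lam μ p ((1 : ℝ) / 2) ε (z (k + 1)) (z k)) atTop (𝓝 (μ * L)))
    {ψ : ℕ → ℕ} (hψ : Tendsto ψ atTop atTop) {u v : Fin n → ℝ}
    (hlim : Tendsto (fun j => (z (ψ j), z (ψ j + 1))) atTop (𝓝 (u, v))) : u = v := by
  have hθ : (0 : ℝ) ≤ 1 / 2 := by norm_num
  have hψ₁ : Tendsto (fun j => ψ j + 1) atTop atTop := (tendsto_add_atTop_nat 1).comp hψ
  have hu := (continuous_fst.tendsto _).comp hlim
  have hv := (continuous_snd.tendsto _).comp hlim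
  have hCu : Cobj A b lam p ((1 : ℝ) / 2) ε u = L :=
    tendsto_nhds_unique (((continuous_Cobj hθ hε).tendsto u).comp hu) (hT.comp hψ)
  have hCv : Cobj A b lam p ((1 : ℝ) / 2) ε v = L :=
    tendsto_nhds_unique (((continuous_Cobj hθ hε).tendsto v).comp hv) (hT.comp hψ₁)
  have hvu : Csur A b lam μ p ((1 : ℝ) / 2) ε v u = μ * L :=
    tendsto_nhds_unique (((continuous_Csur hθ hε).tendsto (v, u)).comp (hv.prodMk_nhds hu))
      (hS.comp hψ)
  have hlim_min : ∀ (χ : ℕ → ℕ) (y : Fin n → ℝ), Tendsto χ atTop atTop →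
      Tendsto (fun j => z (χ j)) atTop (𝓝 y) → ∀ w, μ * L ≤ Csur A b lam μ p ((1 : ℝ) / 2) ε w y :=
    fun χ _ hχ hy w => le_of_tendsto_of_tendsto' (hS.comp hχ)
      (((continuous_Csur hθ hε).tendsto (w, _)).comp (tendsto_const_nhds.prodMk_nhds hy))
      fun j => hmin (χ j) w
  refine eq_of_isMin_Csur (b := b) (p := p) hlam hμ hμA hε
    (fun w => ?_) (fun w => ?_) (fun w => ?_) ?_
  · rw [Csur_self, hCu]
    exact hlim_min _ _ hψ hu w
  · rw [hvu]
    exact hlim_min _ _ hψ hu w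
  · rw [Csur_self, hCv]
    exact hlim_min _ _ hψ₁ hv w
  · rw [hvu, hCv]

end Iteration

theorem stmt_14 {m n : ℕ} (A : Matrix (Fin m) (Fin n) ℝ) (b : Fin m → ℝ)
    (lam μ p : ℝ) (ε : Fin n → ℝ)
    (hlam : 0 < lam) (hp : p ∈ Set.Ioo (0 : ℝ) 1) (hε : ∀ i, 0 < ε i)
    (hμ : 0 < μ) (hμ2 : μ < 1 / (l2OpNorm A) ^ 2)
    (z : ℕ → Fin n → ℝ)
    (hmin : ∀ k : ℕ, ∀ w : Fin n → ℝ,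
      Csur A b lam μ p ((1 : ℝ) / 2) ε (z (k + 1)) (z k) ≤
        Csur A b lam μ p ((1 : ℝ) / 2) ε w (z k))
    (hdesc : ∀ k : ℕ,
      Cobj A b lam p ((1 : ℝ) / 2) ε (z (k + 1)) ≤
        (1 / μ) * Csur A b lam μ p ((1 : ℝ) / 2) ε (z (k + 1)) (z k)) :
    Filter.Tendsto (fun k : ℕ => ∑ i, (z (k + 1) i - z k i) ^ 2)
      Filter.atTop (nhds 0) := by
  have hε' : ∀ i, 0 ≤ ε i := fun i => (hε i).le
  have hμA : μ * l2OpNorm A ^ 2 < 1 := by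
    rcases (sq_nonneg (l2OpNorm A)).eq_or_lt with h | h
    · simp [← h]
    · rwa [lt_div_iff₀ h] at hμ2
  obtain ⟨L, hT, hS⟩ := exists_tendsto_Cobj_Csur hlam.le hε' hμ hmin hdesc
  have hbdd : Bornology.IsBounded (Set.range fun k => (z k, z (k + 1))) := by
    have hanti := antitone_Cobj_of_isMin_Csur hμ hmin hdesc
    have hsub := isBounded_Cobj_sublevel (A := A) (b := b) hlam hp.1 hε'
      (Cobj A b lam p ((1 : ℝ) / 2) ε (z 0))
    exact (hsub.prod hsub).subset <| Set.range_subset_iff.2 fun k =>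
      ⟨hanti (Nat.zero_le k), hanti (Nat.zero_le (k + 1))⟩
  refine tendsto_of_subseq_tendsto fun ns hns => ?_
  obtain ⟨⟨u, v⟩, -, φ, hφ, hlim⟩ := tendsto_subseq_of_bounded hbdd fun j => ⟨ns j, rfl⟩
  have huv := eq_of_tendsto_iterate_pair hlam hμ hμA hε hmin hT hS
    (hns.comp hφ.tendsto_atTop) hlim
  refine ⟨φ, ?_⟩
  have hgap : Continuous fun q : (Fin n → ℝ) × (Fin n → ℝ) => ∑ i, (q.2 i - q.1 i) ^ 2 := by
    fun_prop
  simpa [huv, Function.comp_def] using (hgap.tendsto (u, v)).comp hlim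
end

section
/- Suppose 0 < μ ≤ 1/‖A‖₂², where ‖A‖₂ is the operator norm of A from (ℝⁿ, ‖·‖₂) to (ℝ^m, ‖·‖₂). Then for all z, y ∈ ℝⁿ, C^{2/3}_{λ,μ}(z, y) ≥ μ·(‖Az − b‖₂² + λ·Σ_{i=1}^{n} |z_i|^{2/3}/(|y_i| + ε_i)^{2/3 − p}). Moreover, for every y ∈ ℝⁿ the diagonal identity C^{2/3}_{λ,μ}(y, y) = μ·C^{2/3}_λ(y) holds. -/
lemma mulVec_sq_le {m n : ℕ} (A : Matrix (Fin m) (Fin n) ℝ) (w : Fin n → ℝ) :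
    ∑ j, (A.mulVec w j) ^ 2 ≤ (l2OpNorm A) ^ 2 * ∑ i, (w i) ^ 2 := by
  set f := LinearMap.toContinuousLinearMap (Matrix.toEuclideanLin A)
  set x : EuclideanSpace ℝ (Fin n) := (WithLp.equiv 2 _).symm w
  have hfx : f x = (WithLp.equiv 2 _).symm (A.mulVec w) := by
    simpa [f, x] using Matrix.toEuclideanLin_piLp_equiv_symm A w
  have h1 : ‖f x‖ ≤ ‖f‖ * ‖x‖ := f.le_opNorm x
  have h2 : ‖f x‖ ^ 2 ≤ (‖f‖ * ‖x‖) ^ 2 := by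
    apply pow_le_pow_left₀ (norm_nonneg _) h1
  have hx2 : ‖x‖ ^ 2 = ∑ i, (w i) ^ 2 := by
    rw [EuclideanSpace.norm_eq]
    rw [Real.sq_sqrt (by positivity)]
    simp [x, sq_abs]
  have hfx2 : ‖f x‖ ^ 2 = ∑ j, (A.mulVec w j) ^ 2 := by
    rw [hfx, EuclideanSpace.norm_eq, Real.sq_sqrt (by positivity)]
    simp [sq_abs]
  calc ∑ j, (A.mulVec w j) ^ 2 = ‖f x‖ ^ 2 := hfx2.symm
    _ ≤ (‖f‖ * ‖x‖) ^ 2 := h2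
    _ = (l2OpNorm A) ^ 2 * ∑ i, (w i) ^ 2 := by
        rw [mul_pow, hx2]; rfl

theorem stmt_17 {m n : ℕ} (A : Matrix (Fin m) (Fin n) ℝ) (b : Fin m → ℝ)
    (lam μ p : ℝ) (ε : Fin n → ℝ)
    (hlam : 0 < lam) (hp : p ∈ Set.Ioo (0 : ℝ) 1) (hε : ∀ i, 0 < ε i)
    (hμ : 0 < μ) (hμ2 : μ ≤ 1 / (l2OpNorm A) ^ 2) :
    (∀ z y : Fin n → ℝ,
        μ * (∑ j, ((A.mulVec z - b) j) ^ 2 +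
            lam * ∑ i, |z i| ^ ((2 : ℝ) / 3) / (|y i| + ε i) ^ ((2 : ℝ) / 3 - p)) ≤
          Csur A b lam μ p ((2 : ℝ) / 3) ε z y) ∧
      ∀ y : Fin n → ℝ,
        Csur A b lam μ p ((2 : ℝ) / 3) ε y y = μ * Cobj A b lam p ((2 : ℝ) / 3) ε y := by
  constructor
  · intro z y
    have key : μ * ∑ j, ((A.mulVec z - A.mulVec y) j) ^ 2 ≤ ∑ i, (z i - y i) ^ 2 := by
      have hAw : ∀ j, (A.mulVec z - A.mulVec y) j = A.mulVec (z - y) j := by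
        intro j; simp [Matrix.mulVec_sub]
      have h1 : ∑ j, ((A.mulVec z - A.mulVec y) j) ^ 2 = ∑ j, (A.mulVec (z - y) j) ^ 2 := by
        exact Finset.sum_congr rfl fun j _ => by rw [hAw]
      rw [h1]
      have h2 := mulVec_sq_le A (z - y)
      have hsum : (0:ℝ) ≤ ∑ i, ((z - y) i) ^ 2 := by positivity
      have hμle : μ * (l2OpNorm A) ^ 2 ≤ 1 := by
        rcases eq_or_lt_of_le (sq_nonneg (l2OpNorm A)) with h0 | h0
        · rw [← h0]; simp
        · rw [le_div_iff₀ h0] at hμ2; simpa [one_mul] using hμ2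
      calc μ * ∑ j, (A.mulVec (z - y) j) ^ 2
          ≤ μ * ((l2OpNorm A) ^ 2 * ∑ i, ((z - y) i) ^ 2) := by
            exact mul_le_mul_of_nonneg_left h2 hμ.le
        _ = (μ * (l2OpNorm A) ^ 2) * ∑ i, ((z - y) i) ^ 2 := by ring
        _ ≤ 1 * ∑ i, ((z - y) i) ^ 2 := mul_le_mul_of_nonneg_right hμle hsum
        _ = ∑ i, (z i - y i) ^ 2 := by simp [Pi.sub_apply]
    unfold Csur
    linarith
  · intro y
    unfold Csur Cobj
    simp [sub_self]
    ring
end
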